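/- arXiv:math/9802027 — 2 statements merged into one kernel-verified Lean document; each statement's English description precedes it below -/
import Mathlib

section
/- (Case of general position: third frame expansion, relation I₅ = −I₈ of (3.10) together with formula (3.9) for I₈) Under the stated assumptions, ∇_Y X = −I₈·X + I₆·Y on U, where I₆ = (A_{0.1} − B_{1.0})/(3·F²) − (A·F_{0.1} − B·F_{1.0})/(3·F³) and I₈ = G·(A·G_{1.0} + B·H_{1.0})/(3·F⁹) + H·(A·G_{0.1} + B·H_{0.1})/(3·F⁹) − 10·(H·F_{0.1} + G·F_{1.0})/(3·F⁵) − B·G²·P/(3·F⁹) + (A·G² − 2·H·B·G)·Q/(3·F⁹) − (B·H² − 2·H·A·G)·R/(3·F⁹) + A·H²·S/(3·F⁹). -/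
noncomputable section

open Real

/-- Partial derivative in the first argument (`f_{1.0}`). -/
def pdx (f : ℝ → ℝ → ℝ) : ℝ → ℝ → ℝ := fun x y => deriv (fun t => f t y) x

/-- Partial derivative in the second argument (`f_{0.1}`). -/
def pdy (f : ℝ → ℝ → ℝ) : ℝ → ℝ → ℝ := fun x y => deriv (fun t => f x t) y

/-- Indexed partial derivative: `0 ↦ ∂/∂x`, `1 ↦ ∂/∂y`. -/
def pd (i : Fin 2) (f : ℝ → ℝ → ℝ) : ℝ → ℝ → ℝ := if i = 0 then pdx f else pdy f

/-- Smoothness of a two-variable real function on a set `U ⊆ ℝ²`. -/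
def Smooth2 (U : Set (ℝ × ℝ)) (f : ℝ → ℝ → ℝ) : Prop :=
  ContDiffOn ℝ (⊤ : ℕ∞) (Function.uncurry f) U

/-- The quantity `A` of formula (1.6). -/
def coefA (P Q R S : ℝ → ℝ → ℝ) : ℝ → ℝ → ℝ := fun x y =>
  pdy (pdy P) x y - 2 * pdx (pdy Q) x y + pdx (pdx R) x y
    + 2 * P x y * pdx S x y + S x y * pdx P x y
    - 3 * P x y * pdy R x y - 3 * R x y * pdy P x y
    - 3 * Q x y * pdx R x y + 6 * Q x y * pdy Q x y

/-- The quantity `B` of formula (1.6). -/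
def coefB (P Q R S : ℝ → ℝ → ℝ) : ℝ → ℝ → ℝ := fun x y =>
  pdx (pdx S) x y - 2 * pdx (pdy R) x y + pdy (pdy Q) x y
    - 2 * S x y * pdy P x y - P x y * pdy S x y
    + 3 * S x y * pdx Q x y + 3 * Q x y * pdx S x y
    + 3 * R x y * pdy Q x y - 6 * R x y * pdx R x y

/-- The quantity `G` of formula (2.4). -/
def coefG (P Q R S : ℝ → ℝ → ℝ) : ℝ → ℝ → ℝ := fun x y =>
  -(coefB P Q R S x y) * pdx (coefB P Q R S) x y
    - 3 * coefA P Q R S x y * pdy (coefB P Q R S) x y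
    + 4 * coefB P Q R S x y * pdy (coefA P Q R S) x y
    + 3 * S x y * (coefA P Q R S x y)^2
    - 6 * R x y * coefA P Q R S x y * coefB P Q R S x y
    + 3 * Q x y * (coefB P Q R S x y)^2

/-- The quantity `H` of formula (2.4). -/
def coefH (P Q R S : ℝ → ℝ → ℝ) : ℝ → ℝ → ℝ := fun x y =>
  -(coefA P Q R S x y) * pdy (coefA P Q R S) x y
    - 3 * coefB P Q R S x y * pdx (coefA P Q R S) x y
    + 4 * coefA P Q R S x y * pdx (coefB P Q R S) x y
    - 3 * P x y * (coefB P Q R S x y)^2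
    + 6 * Q x y * coefA P Q R S x y * coefB P Q R S x y
    - 3 * R x y * (coefA P Q R S x y)^2

/-- The quantity `F⁵` of formula (2.2). -/
def coefF5 (P Q R S : ℝ → ℝ → ℝ) : ℝ → ℝ → ℝ := fun x y =>
  coefA P Q R S x y * coefB P Q R S x y * pdy (coefA P Q R S) x y
    + coefA P Q R S x y * coefB P Q R S x y * pdx (coefB P Q R S) x y
    - (coefA P Q R S x y)^2 * pdy (coefB P Q R S) x y
    - (coefB P Q R S x y)^2 * pdx (coefA P Q R S) x y
    - P x y * (coefB P Q R S x y)^3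
    + 3 * Q x y * coefA P Q R S x y * (coefB P Q R S x y)^2
    - 3 * R x y * (coefA P Q R S x y)^2 * coefB P Q R S x y
    + S x y * (coefA P Q R S x y)^3

/-- The fully covariant symbol `θ_{ijk}` of (2.7) built from the ODE coefficients. -/
def thetaLow (P Q R S : ℝ → ℝ → ℝ) (i j k : Fin 2) : ℝ → ℝ → ℝ :=
  match i.1 + j.1 + k.1 with
  | 0 => P
  | 1 => Q
  | 2 => R
  | _ => S

/-- The symbol `θ^k_{ij}` of (2.8), obtained by raising the first index with `d^{kr}`. -/
def thetaUp (P Q R S : ℝ → ℝ → ℝ) (k i j : Fin 2) : ℝ → ℝ → ℝ :=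
  if k = 0 then thetaLow P Q R S 1 i j
  else fun x y => -(thetaLow P Q R S 0 i j x y)

/-- The affine connection `Γ^k_{ij} = θ^k_{ij} − (φ_i δ^k_j + φ_j δ^k_i)/3` of (3.3)/(4.22). -/
def gamConn (P Q R S phi1 phi2 : ℝ → ℝ → ℝ) (k i j : Fin 2) : ℝ → ℝ → ℝ := fun x y =>
  thetaUp P Q R S k i j x y -
    ((if i = 0 then phi1 x y else phi2 x y) * (if k = j then (1:ℝ) else 0)
      + (if j = 0 then phi1 x y else phi2 x y) * (if k = i then (1:ℝ) else 0)) / 3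

/-- Covariant derivative `(∇_V W)^k = Σ_i V^i (∂W^k/∂x^i + Σ_s Γ^k_{is} W^s)`. -/
def covD (Gam : Fin 2 → Fin 2 → Fin 2 → ℝ → ℝ → ℝ) (V W : Fin 2 → ℝ → ℝ → ℝ)
    (k : Fin 2) : ℝ → ℝ → ℝ := fun x y =>
  ∑ i : Fin 2, V i x y * (pd i (W k) x y + ∑ s : Fin 2, Gam k i s x y * W s x y)

/-- The fifth root `F = (F⁵)^{1/5}` (real power), for the case of general position `F⁵ > 0`. -/
def frF (P Q R S : ℝ → ℝ → ℝ) : ℝ → ℝ → ℝ := fun x y =>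
  (coefF5 P Q R S x y) ^ ((1:ℝ)/5)

/-- `φ₁ = −F_{1.0}/F`. -/
def phiGP1 (P Q R S : ℝ → ℝ → ℝ) : ℝ → ℝ → ℝ := fun x y =>
  -(pdx (frF P Q R S) x y / frF P Q R S x y)

/-- `φ₂ = −F_{0.1}/F`. -/
def phiGP2 (P Q R S : ℝ → ℝ → ℝ) : ℝ → ℝ → ℝ := fun x y =>
  -(pdy (frF P Q R S) x y / frF P Q R S x y)

/-- The vector field `X = F⁻²·(B, −A)` of (3.4). -/
def frameX (P Q R S : ℝ → ℝ → ℝ) (k : Fin 2) : ℝ → ℝ → ℝ := fun x y =>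
  (if k = 0 then coefB P Q R S x y else -(coefA P Q R S x y)) / (frF P Q R S x y)^2

/-- The vector field `Y = F⁻⁴·(G, H)` of (3.4). -/
def frameY (P Q R S : ℝ → ℝ → ℝ) (k : Fin 2) : ℝ → ℝ → ℝ := fun x y =>
  (if k = 0 then coefG P Q R S x y else coefH P Q R S x y) / (frF P Q R S x y)^4

/-- The invariant `I₆` in the simplified form (3.11). -/
def inv6 (P Q R S : ℝ → ℝ → ℝ) : ℝ → ℝ → ℝ := fun x y =>
  (pdy (coefA P Q R S) x y - pdx (coefB P Q R S) x y) / (3 * (frF P Q R S x y)^2)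
    - (coefA P Q R S x y * pdy (frF P Q R S) x y
        - coefB P Q R S x y * pdx (frF P Q R S) x y) / (3 * (frF P Q R S x y)^3)

/-- The invariant `I₈` of formula (3.9). -/
def inv8 (P Q R S : ℝ → ℝ → ℝ) : ℝ → ℝ → ℝ := fun x y =>
  coefG P Q R S x y * (coefA P Q R S x y * pdx (coefG P Q R S) x y
      + coefB P Q R S x y * pdx (coefH P Q R S) x y) / (3 * (frF P Q R S x y)^9)
  + coefH P Q R S x y * (coefA P Q R S x y * pdy (coefG P Q R S) x y
      + coefB P Q R S x y * pdy (coefH P Q R S) x y) / (3 * (frF P Q R S x y)^9)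
  - 10 * (coefH P Q R S x y * pdy (frF P Q R S) x y
      + coefG P Q R S x y * pdx (frF P Q R S) x y) / (3 * (frF P Q R S x y)^5)
  - coefB P Q R S x y * (coefG P Q R S x y)^2 * P x y / (3 * (frF P Q R S x y)^9)
  + (coefA P Q R S x y * (coefG P Q R S x y)^2
      - 2 * coefH P Q R S x y * coefB P Q R S x y * coefG P Q R S x y) * Q x y
      / (3 * (frF P Q R S x y)^9)
  - (coefB P Q R S x y * (coefH P Q R S x y)^2
      - 2 * coefH P Q R S x y * coefA P Q R S x y * coefG P Q R S x y) * R x y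
      / (3 * (frF P Q R S x y)^9)
  + coefA P Q R S x y * (coefH P Q R S x y)^2 * S x y / (3 * (frF P Q R S x y)^9)

/-!
Write `b = (B, −A)` and `g = (G, H)`, so that `X = F⁻² b` and `Y = F⁻⁴ g`. The connection `Γ` is
`θ` corrected by the projective term of `φ = −d log F`, and the Leibniz rule turns this into
`∇_Y X = F⁻⁶ ∇^θ_g b + (5/3) φ(Y) X − (1/3) φ(X) Y`. Since `det (b, g) = A G + B H = 3 F⁵ ≠ 0`,
Cramer's rule expands `∇^θ_g b` in the basis `b, g`: the `g`-coefficient is `(A_{0.1} − B_{1.0})/3`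
by a polynomial identity in `P, Q, R, S, A, B` and their first derivatives, which yields `I₆`, and
the `b`-coefficient combines with `(5/3) φ(Y)` into `−I₈` once `A G + B H = 3 F⁵` is differentiated.
-/

open Function

namespace Smooth2

variable {U : Set (ℝ × ℝ)} {f : ℝ → ℝ → ℝ} {x y : ℝ}

theorem differentiableAt (hf : Smooth2 U f) (hU : IsOpen U) (h : (x, y) ∈ U) :
    DifferentiableAt ℝ (uncurry f) (x, y) :=
  (hf.contDiffAt (hU.mem_nhds h)).differentiableAt (by simp)

theorem pdx_eq_fderiv (hf : Smooth2 U f) (hU : IsOpen U) (h : (x, y) ∈ U) :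
    pdx f x y = fderiv ℝ (uncurry f) (x, y) (1, 0) :=
  (HasFDerivAt.comp_hasDerivAt (f := fun t => (t, y)) x (hf.differentiableAt hU h).hasFDerivAt
    ((hasDerivAt_id x).prodMk (hasDerivAt_const x y))).deriv

theorem pdy_eq_fderiv (hf : Smooth2 U f) (hU : IsOpen U) (h : (x, y) ∈ U) :
    pdy f x y = fderiv ℝ (uncurry f) (x, y) (0, 1) :=
  (HasFDerivAt.comp_hasDerivAt (f := fun t => (x, t)) y (hf.differentiableAt hU h).hasFDerivAt
    ((hasDerivAt_const y x).prodMk (hasDerivAt_id y))).deriv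

theorem hasDerivAt_pdx (hf : Smooth2 U f) (hU : IsOpen U) (h : (x, y) ∈ U) :
    HasDerivAt (fun t => f t y) (pdx f x y) x :=
  (DifferentiableAt.comp (f := fun t => (t, y)) x (hf.differentiableAt hU h)
    (differentiableAt_id.prodMk (differentiableAt_const y))).hasDerivAt

theorem hasDerivAt_pdy (hf : Smooth2 U f) (hU : IsOpen U) (h : (x, y) ∈ U) :
    HasDerivAt (fun t => f x t) (pdy f x y) y :=
  (DifferentiableAt.comp (f := fun t => (x, t)) y (hf.differentiableAt hU h)
    ((differentiableAt_const x).prodMk differentiableAt_id)).hasDerivAt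

theorem smooth2_pdx (hf : Smooth2 U f) (hU : IsOpen U) : Smooth2 U (pdx f) :=
  ((ContinuousLinearMap.apply ℝ ℝ ((1 : ℝ), (0 : ℝ))).contDiff.comp_contDiffOn
    (hf.fderiv_of_isOpen hU le_rfl)).congr fun _ h => hf.pdx_eq_fderiv hU h

theorem smooth2_pdy (hf : Smooth2 U f) (hU : IsOpen U) : Smooth2 U (pdy f) :=
  ((ContinuousLinearMap.apply ℝ ℝ ((0 : ℝ), (1 : ℝ))).contDiff.comp_contDiffOn
    (hf.fderiv_of_isOpen hU le_rfl)).congr fun _ h => hf.pdy_eq_fderiv hU h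

end Smooth2

theorem pd_zero (f : ℝ → ℝ → ℝ) : pd 0 f = pdx f := rfl

theorem pd_one (f : ℝ → ℝ → ℝ) : pd 1 f = pdy f := rfl

theorem pdx_neg (f : ℝ → ℝ → ℝ) (x y : ℝ) : pdx (fun x y => -f x y) x y = -pdx f x y :=
  deriv.fun_neg

theorem pdy_neg (f : ℝ → ℝ → ℝ) (x y : ℝ) : pdy (fun x y => -f x y) x y = -pdy f x y :=
  deriv.fun_neg

theorem deriv_div_sq {u v : ℝ → ℝ} {u' v' x : ℝ} (hu : HasDerivAt u u' x)
    (hv : HasDerivAt v v' x) (hx : v x ≠ 0) :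
    deriv (fun t => u t / v t ^ 2) x = u' / v x ^ 2 + 2 * -(v' / v x) * (u x / v x ^ 2) := by
  have h : HasDerivAt (fun t => u t / v t ^ 2) _ x := hu.div (hv.pow 2) (pow_ne_zero 2 hx)
  rw [h.deriv]
  field_simp
  ring

def det2 {R : Type*} [CommRing R] (u v : Fin 2 → R) : R := u 0 * v 1 - u 1 * v 0

theorem mul_det2 {R : Type*} [CommRing R] (u v w : Fin 2 → R) (k : Fin 2) :
    w k * det2 u v = det2 w v * u k + det2 u w * v k := by
  fin_cases k <;> simp only [det2, Fin.zero_eta, Fin.mk_one] <;> ring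

def formApply (φ₁ φ₂ : ℝ → ℝ → ℝ) (V : Fin 2 → ℝ → ℝ → ℝ) : ℝ → ℝ → ℝ := fun x y =>
  φ₁ x y * V 0 x y + φ₂ x y * V 1 x y

theorem covD_gamConn (P Q R S φ₁ φ₂ : ℝ → ℝ → ℝ) (V W : Fin 2 → ℝ → ℝ → ℝ) (k : Fin 2)
    (x y : ℝ) :
    covD (gamConn P Q R S φ₁ φ₂) V W k x y = covD (thetaUp P Q R S) V W k x y
      - (formApply φ₁ φ₂ V x y * W k x y + formApply φ₁ φ₂ W x y * V k x y) / 3 := by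
  fin_cases k <;>
    simp only [covD, gamConn, formApply, Fin.sum_univ_two, Fin.zero_eta, Fin.mk_one, Fin.isValue,
      ↓reduceIte, one_ne_zero, zero_ne_one] <;>
    ring

def frameXNum (P Q R S : ℝ → ℝ → ℝ) (k : Fin 2) : ℝ → ℝ → ℝ := fun x y =>
  if k = 0 then coefB P Q R S x y else -(coefA P Q R S x y)

def frameYNum (P Q R S : ℝ → ℝ → ℝ) (k : Fin 2) : ℝ → ℝ → ℝ := fun x y =>
  if k = 0 then coefG P Q R S x y else coefH P Q R S x y

section Frame

variable {U : Set (ℝ × ℝ)} {P Q R S : ℝ → ℝ → ℝ} {x y : ℝ}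

theorem frameXNum_zero : frameXNum P Q R S 0 x y = coefB P Q R S x y := rfl

theorem frameXNum_one : frameXNum P Q R S 1 x y = -coefA P Q R S x y := rfl

theorem frameYNum_zero : frameYNum P Q R S 0 x y = coefG P Q R S x y := rfl

theorem frameYNum_one : frameYNum P Q R S 1 x y = coefH P Q R S x y := rfl

theorem frameX_eq (k : Fin 2) :
    frameX P Q R S k x y = frameXNum P Q R S k x y / frF P Q R S x y ^ 2 := rfl

theorem frameY_eq (k : Fin 2) :
    frameY P Q R S k x y = frameYNum P Q R S k x y / frF P Q R S x y ^ 4 := rfl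

theorem smooth2_coefA (hU : IsOpen U) (hP : Smooth2 U P) (hQ : Smooth2 U Q) (hR : Smooth2 U R)
    (hS : Smooth2 U S) : Smooth2 U (coefA P Q R S) := by
  have := (hP.smooth2_pdy hU).smooth2_pdy hU
  have := (hQ.smooth2_pdy hU).smooth2_pdx hU
  have := (hR.smooth2_pdx hU).smooth2_pdx hU
  have := hS.smooth2_pdx hU
  have := hP.smooth2_pdx hU
  have := hP.smooth2_pdy hU
  have := hR.smooth2_pdx hU
  have := hR.smooth2_pdy hU
  have := hQ.smooth2_pdy hU
  unfold Smooth2 coefA uncurry at *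
  fun_prop

theorem smooth2_coefB (hU : IsOpen U) (hP : Smooth2 U P) (hQ : Smooth2 U Q) (hR : Smooth2 U R)
    (hS : Smooth2 U S) : Smooth2 U (coefB P Q R S) := by
  have := (hS.smooth2_pdx hU).smooth2_pdx hU
  have := (hR.smooth2_pdy hU).smooth2_pdx hU
  have := (hQ.smooth2_pdy hU).smooth2_pdy hU
  have := hP.smooth2_pdy hU
  have := hS.smooth2_pdx hU
  have := hS.smooth2_pdy hU
  have := hQ.smooth2_pdx hU
  have := hQ.smooth2_pdy hU
  have := hR.smooth2_pdx hU
  unfold Smooth2 coefB uncurry at *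
  fun_prop

theorem smooth2_coefG (hU : IsOpen U) (hP : Smooth2 U P) (hQ : Smooth2 U Q) (hR : Smooth2 U R)
    (hS : Smooth2 U S) : Smooth2 U (coefG P Q R S) := by
  have hA := smooth2_coefA hU hP hQ hR hS
  have hB := smooth2_coefB hU hP hQ hR hS
  have := hA.smooth2_pdy hU
  have := hB.smooth2_pdx hU
  have := hB.smooth2_pdy hU
  unfold Smooth2 coefG uncurry at *
  fun_prop

theorem smooth2_coefH (hU : IsOpen U) (hP : Smooth2 U P) (hQ : Smooth2 U Q) (hR : Smooth2 U R)
    (hS : Smooth2 U S) : Smooth2 U (coefH P Q R S) := by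
  have hA := smooth2_coefA hU hP hQ hR hS
  have hB := smooth2_coefB hU hP hQ hR hS
  have := hA.smooth2_pdx hU
  have := hA.smooth2_pdy hU
  have := hB.smooth2_pdx hU
  unfold Smooth2 coefH uncurry at *
  fun_prop

theorem smooth2_coefF5 (hU : IsOpen U) (hP : Smooth2 U P) (hQ : Smooth2 U Q) (hR : Smooth2 U R)
    (hS : Smooth2 U S) : Smooth2 U (coefF5 P Q R S) := by
  have hA := smooth2_coefA hU hP hQ hR hS
  have hB := smooth2_coefB hU hP hQ hR hS
  have := hA.smooth2_pdx hU
  have := hA.smooth2_pdy hU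
  have := hB.smooth2_pdx hU
  have := hB.smooth2_pdy hU
  unfold Smooth2 coefF5 uncurry at *
  fun_prop

theorem smooth2_frameXNum (hA : Smooth2 U (coefA P Q R S)) (hB : Smooth2 U (coefB P Q R S))
    (k : Fin 2) : Smooth2 U (frameXNum P Q R S k) := by
  fin_cases k
  exacts [hB, hA.neg]

theorem covD_thetaUp_frameNum_zero :
    covD (thetaUp P Q R S) (frameYNum P Q R S) (frameXNum P Q R S) 0 x y
      = coefG P Q R S x y * pdx (coefB P Q R S) x y + coefH P Q R S x y * pdy (coefB P Q R S) x y
        + (Q x y * coefG P Q R S x y * coefB P Q R S x y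
          + R x y * (coefH P Q R S x y * coefB P Q R S x y - coefG P Q R S x y * coefA P Q R S x y)
          - S x y * coefH P Q R S x y * coefA P Q R S x y) := by
  simp only [covD, Fin.sum_univ_two, pd_zero, pd_one]
  show coefG P Q R S x y * (pdx (coefB P Q R S) x y
        + (Q x y * coefB P Q R S x y + R x y * -coefA P Q R S x y))
      + coefH P Q R S x y * (pdy (coefB P Q R S) x y
        + (R x y * coefB P Q R S x y + S x y * -coefA P Q R S x y)) = _
  ring

theorem covD_thetaUp_frameNum_one :
    covD (thetaUp P Q R S) (frameYNum P Q R S) (frameXNum P Q R S) 1 x y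
      = -(coefG P Q R S x y * pdx (coefA P Q R S) x y + coefH P Q R S x y * pdy (coefA P Q R S) x y)
        - (P x y * coefG P Q R S x y * coefB P Q R S x y
          + Q x y * (coefH P Q R S x y * coefB P Q R S x y - coefG P Q R S x y * coefA P Q R S x y)
          - R x y * coefH P Q R S x y * coefA P Q R S x y) := by
  simp only [covD, Fin.sum_univ_two, pd_zero, pd_one]
  show coefG P Q R S x y * (pdx (fun x y => -coefA P Q R S x y) x y
        + (-P x y * coefB P Q R S x y + -Q x y * -coefA P Q R S x y))
      + coefH P Q R S x y * (pdy (fun x y => -coefA P Q R S x y) x y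
        + (-Q x y * coefB P Q R S x y + -R x y * -coefA P Q R S x y)) = _
  rw [pdx_neg, pdy_neg]
  ring

theorem coefA_mul_coefG_add_coefB_mul_coefH :
    coefA P Q R S x y * coefG P Q R S x y + coefB P Q R S x y * coefH P Q R S x y
      = 3 * coefF5 P Q R S x y := by
  simp only [coefG, coefH, coefF5]
  ring

theorem det2_frameXNum_frameYNum :
    det2 (frameXNum P Q R S · x y) (frameYNum P Q R S · x y) = 3 * coefF5 P Q R S x y := by
  rw [det2, frameXNum_zero, frameXNum_one, frameYNum_zero, frameYNum_one,
    ← coefA_mul_coefG_add_coefB_mul_coefH]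
  ring

theorem det2_frameXNum_covD :
    det2 (frameXNum P Q R S · x y)
        (covD (thetaUp P Q R S) (frameYNum P Q R S) (frameXNum P Q R S) · x y)
      = coefF5 P Q R S x y * (pdy (coefA P Q R S) x y - pdx (coefB P Q R S) x y) := by
  rw [det2, frameXNum_zero, frameXNum_one, covD_thetaUp_frameNum_zero, covD_thetaUp_frameNum_one]
  simp only [coefG, coefH, coefF5]
  ring

theorem covD_thetaUp_frameNum_eq (hF5 : coefF5 P Q R S x y ≠ 0) (k : Fin 2) :
    covD (thetaUp P Q R S) (frameYNum P Q R S) (frameXNum P Q R S) k x y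
      = det2 (covD (thetaUp P Q R S) (frameYNum P Q R S) (frameXNum P Q R S) · x y)
            (frameYNum P Q R S · x y) / (3 * coefF5 P Q R S x y) * frameXNum P Q R S k x y
        + (pdy (coefA P Q R S) x y - pdx (coefB P Q R S) x y) / 3 * frameYNum P Q R S k x y := by
  have h := mul_det2 (frameXNum P Q R S · x y) (frameYNum P Q R S · x y)
    (covD (thetaUp P Q R S) (frameYNum P Q R S) (frameXNum P Q R S) · x y) k
  rw [det2_frameXNum_frameYNum, det2_frameXNum_covD] at h
  field_simp
  linear_combination h

theorem three_mul_pdx_coefF5 (hU : IsOpen U) (hA : Smooth2 U (coefA P Q R S))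
    (hB : Smooth2 U (coefB P Q R S)) (hG : Smooth2 U (coefG P Q R S))
    (hH : Smooth2 U (coefH P Q R S)) (hxy : (x, y) ∈ U) :
    3 * pdx (coefF5 P Q R S) x y
      = pdx (coefA P Q R S) x y * coefG P Q R S x y + coefA P Q R S x y * pdx (coefG P Q R S) x y
        + (pdx (coefB P Q R S) x y * coefH P Q R S x y
          + coefB P Q R S x y * pdx (coefH P Q R S) x y) := by
  rw [pdx, ← deriv_const_mul_field]
  simp only [← coefA_mul_coefG_add_coefB_mul_coefH]
  exact (((hA.hasDerivAt_pdx hU hxy).mul (hG.hasDerivAt_pdx hU hxy)).add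
    ((hB.hasDerivAt_pdx hU hxy).mul (hH.hasDerivAt_pdx hU hxy))).deriv

theorem three_mul_pdy_coefF5 (hU : IsOpen U) (hA : Smooth2 U (coefA P Q R S))
    (hB : Smooth2 U (coefB P Q R S)) (hG : Smooth2 U (coefG P Q R S))
    (hH : Smooth2 U (coefH P Q R S)) (hxy : (x, y) ∈ U) :
    3 * pdy (coefF5 P Q R S) x y
      = pdy (coefA P Q R S) x y * coefG P Q R S x y + coefA P Q R S x y * pdy (coefG P Q R S) x y
        + (pdy (coefB P Q R S) x y * coefH P Q R S x y
          + coefB P Q R S x y * pdy (coefH P Q R S) x y) := by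
  rw [pdy, ← deriv_const_mul_field]
  simp only [← coefA_mul_coefG_add_coefB_mul_coefH]
  exact (((hA.hasDerivAt_pdy hU hxy).mul (hG.hasDerivAt_pdy hU hxy)).add
    ((hB.hasDerivAt_pdy hU hxy).mul (hH.hasDerivAt_pdy hU hxy))).deriv

theorem frF_pos (h : 0 < coefF5 P Q R S x y) : 0 < frF P Q R S x y :=
  rpow_pos_of_pos h _

theorem frF_pow_five (h : 0 ≤ coefF5 P Q R S x y) : frF P Q R S x y ^ 5 = coefF5 P Q R S x y := by
  simpa [frF] using rpow_inv_natCast_pow h (n := 5) (by norm_num)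

theorem hasDerivAt_frF_x (hF5 : Smooth2 U (coefF5 P Q R S)) (hU : IsOpen U) (hxy : (x, y) ∈ U)
    (hpos : 0 < coefF5 P Q R S x y) :
    HasDerivAt (fun t => frF P Q R S t y)
      (pdx (coefF5 P Q R S) x y * frF P Q R S x y / (5 * coefF5 P Q R S x y)) x := by
  refine ((hF5.hasDerivAt_pdx hU hxy).rpow_const (p := 1 / 5) (Or.inl hpos.ne')).congr_deriv ?_
  rw [rpow_sub_one hpos.ne']
  unfold frF
  ring

theorem hasDerivAt_frF_y (hF5 : Smooth2 U (coefF5 P Q R S)) (hU : IsOpen U) (hxy : (x, y) ∈ U)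
    (hpos : 0 < coefF5 P Q R S x y) :
    HasDerivAt (fun t => frF P Q R S x t)
      (pdy (coefF5 P Q R S) x y * frF P Q R S x y / (5 * coefF5 P Q R S x y)) y := by
  refine ((hF5.hasDerivAt_pdy hU hxy).rpow_const (p := 1 / 5) (Or.inl hpos.ne')).congr_deriv ?_
  rw [rpow_sub_one hpos.ne']
  unfold frF
  ring

theorem pdx_frameX (hU : IsOpen U) (hA : Smooth2 U (coefA P Q R S))
    (hB : Smooth2 U (coefB P Q R S)) (hF5 : Smooth2 U (coefF5 P Q R S)) (hxy : (x, y) ∈ U)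
    (hpos : 0 < coefF5 P Q R S x y) (k : Fin 2) :
    pdx (frameX P Q R S k) x y = pdx (frameXNum P Q R S k) x y / frF P Q R S x y ^ 2
      + 2 * phiGP1 P Q R S x y * frameX P Q R S k x y :=
  deriv_div_sq ((smooth2_frameXNum hA hB k).hasDerivAt_pdx hU hxy)
    (hasDerivAt_frF_x hF5 hU hxy hpos).differentiableAt.hasDerivAt (frF_pos hpos).ne'

theorem pdy_frameX (hU : IsOpen U) (hA : Smooth2 U (coefA P Q R S))
    (hB : Smooth2 U (coefB P Q R S)) (hF5 : Smooth2 U (coefF5 P Q R S)) (hxy : (x, y) ∈ U)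
    (hpos : 0 < coefF5 P Q R S x y) (k : Fin 2) :
    pdy (frameX P Q R S k) x y = pdy (frameXNum P Q R S k) x y / frF P Q R S x y ^ 2
      + 2 * phiGP2 P Q R S x y * frameX P Q R S k x y :=
  deriv_div_sq ((smooth2_frameXNum hA hB k).hasDerivAt_pdy hU hxy)
    (hasDerivAt_frF_y hF5 hU hxy hpos).differentiableAt.hasDerivAt (frF_pos hpos).ne'

theorem covD_thetaUp_frameY_frameX (hU : IsOpen U) (hP : Smooth2 U P) (hQ : Smooth2 U Q)
    (hR : Smooth2 U R) (hS : Smooth2 U S) (hxy : (x, y) ∈ U) (hpos : 0 < coefF5 P Q R S x y)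
    (k : Fin 2) :
    covD (thetaUp P Q R S) (frameY P Q R S) (frameX P Q R S) k x y
      = (covD (thetaUp P Q R S) (frameYNum P Q R S) (frameXNum P Q R S) k x y
          + 2 * formApply (phiGP1 P Q R S) (phiGP2 P Q R S) (frameYNum P Q R S) x y
            * frameXNum P Q R S k x y) / frF P Q R S x y ^ 6 := by
  have hA := smooth2_coefA hU hP hQ hR hS
  have hB := smooth2_coefB hU hP hQ hR hS
  have hF5 := smooth2_coefF5 hU hP hQ hR hS
  have hF := (frF_pos hpos).ne'
  simp only [covD, Fin.sum_univ_two, pd_zero, pd_one]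
  rw [pdx_frameX hU hA hB hF5 hxy hpos, pdy_frameX hU hA hB hF5 hxy hpos]
  simp only [frameX_eq, frameY_eq, formApply]
  field_simp
  ring

theorem neg_inv8_eq (hU : IsOpen U) (hP : Smooth2 U P) (hQ : Smooth2 U Q)
    (hR : Smooth2 U R) (hS : Smooth2 U S) (hxy : (x, y) ∈ U) (hpos : 0 < coefF5 P Q R S x y) :
    -inv8 P Q R S x y = 5 / 3 * formApply (phiGP1 P Q R S) (phiGP2 P Q R S) (frameY P Q R S) x y
      + det2 (covD (thetaUp P Q R S) (frameYNum P Q R S) (frameXNum P Q R S) · x y)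
          (frameYNum P Q R S · x y) / (3 * coefF5 P Q R S x y * frF P Q R S x y ^ 4) := by
  have hA := smooth2_coefA hU hP hQ hR hS
  have hB := smooth2_coefB hU hP hQ hR hS
  have hG := smooth2_coefG hU hP hQ hR hS
  have hH := smooth2_coefH hU hP hQ hR hS
  have hF5 := smooth2_coefF5 hU hP hQ hR hS
  have hF := (frF_pos hpos).ne'
  have hFx : pdx (frF P Q R S) x y = _ := (hasDerivAt_frF_x hF5 hU hxy hpos).deriv
  have hFy : pdy (frF P Q R S) x y = _ := (hasDerivAt_frF_y hF5 hU hxy hpos).deriv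
  have hdx := three_mul_pdx_coefF5 hU hA hB hG hH hxy
  have hdy := three_mul_pdy_coefF5 hU hA hB hG hH hxy
  rw [← frF_pow_five hpos.le] at hFx hFy ⊢
  rw [det2, covD_thetaUp_frameNum_zero, covD_thetaUp_frameNum_one]
  simp only [inv8, formApply, phiGP1, phiGP2, frameY_eq, frameYNum_zero, frameYNum_one]
  rw [hFx, hFy]
  linear_combination (norm := skip)
    (coefG P Q R S x y * hdx + coefH P Q R S x y * hdy) / (3 * frF P Q R S x y ^ 9)
  field_simp
  ring

end Frame

theorem frame_expansion_YX_general
    (U : Set (ℝ × ℝ)) (hU : IsOpen U)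
    (P Q R S : ℝ → ℝ → ℝ)
    (hP : Smooth2 U P) (hQ : Smooth2 U Q) (hR : Smooth2 U R) (hS : Smooth2 U S)
    (hpos : ∀ x y : ℝ, (x, y) ∈ U → 0 < coefF5 P Q R S x y) :
    ∀ k : Fin 2, ∀ x y : ℝ, (x, y) ∈ U →
      covD (gamConn P Q R S (phiGP1 P Q R S) (phiGP2 P Q R S))
          (frameY P Q R S) (frameX P Q R S) k x y
        = -(inv8 P Q R S x y) * frameX P Q R S k x y
          + inv6 P Q R S x y * frameY P Q R S k x y := by
  intro k x y hxy
  have hpos := hpos x y hxy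
  have hF := (frF_pos hpos).ne'
  rw [covD_gamConn, covD_thetaUp_frameY_frameX hU hP hQ hR hS hxy hpos,
    covD_thetaUp_frameNum_eq hpos.ne', neg_inv8_eq hU hP hQ hR hS hxy hpos]
  simp only [inv6, formApply, phiGP1, phiGP2, frameX_eq, frameY_eq, frameXNum_zero, frameXNum_one,
    frameYNum_zero, frameYNum_one]
  field_simp
  ring

/-- Third frame expansion of (3.5): `∇_Y X = −I₈·X + I₆·Y` (formula (3.9) for `I₈`
and relation `I₅ = −I₈` of (3.10)). -/
theorem frame_expansion_YX
    (U : Set (ℝ × ℝ)) (hU : IsOpen U) (hUconn : IsConnected U)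
    (P Q R S : ℝ → ℝ → ℝ)
    (hP : Smooth2 U P) (hQ : Smooth2 U Q) (hR : Smooth2 U R) (hS : Smooth2 U S)
    (hpos : ∀ x y : ℝ, (x, y) ∈ U → 0 < coefF5 P Q R S x y) :
    ∀ k : Fin 2, ∀ x y : ℝ, (x, y) ∈ U →
      covD (gamConn P Q R S (phiGP1 P Q R S) (phiGP2 P Q R S))
          (frameY P Q R S) (frameX P Q R S) k x y
        = -(inv8 P Q R S x y) * frameX P Q R S k x y
          + inv6 P Q R S x y * frameY P Q R S k x y :=
  frame_expansion_YX_general U hU P Q R S hP hQ hR hS hpos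
end
end

section
/- (Covariant-derivative identities (7.18) and (7.19) in special coordinates) Assume the special-coordinate conditions of intermediate degeneration with M = 0: P = 0 on U, the expressions A and B satisfy A = 0 and B = 1 identically on U, and Q_{1.0} = (12/5)·Q² on U. Define Ω = R_{1.0} − 2·Q_{0.1} and Λ = −2·R_{1.0} + 3·Q_{0.1} + (6/5)·Q·R. Then on U one has Ω_{1.0} = 3·Q·Ω and Λ_{1.0} = (12/5)·Q·Λ (equivalently, the covariant derivatives of the weight-1 pseudoscalars Ω and Λ along x satisfy ∇₁Ω = (9/5)·Q·Ω and ∇₁Λ = (6/5)·Q·Λ with φ₁ = −(6/5)·Q). -/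
noncomputable section

open Real

/-!
On the open set `U` all derivatives of `P = 0` vanish, so `A = 0` becomes
`R_{2.0} = 2 Q_{1.1} + 3 Q R_{1.0} - 6 Q Q_{0.1}`. Differentiating `Q_{1.0} = (12/5) Q²` in `y`
and using the symmetry of mixed partials gives `Q_{1.1} = (24/5) Q Q_{0.1}`. Substituting both
into `Ω_{1.0}` and `Λ_{1.0}` leaves polynomial identities.
-/

open Function Filter Topology

section Slices

variable {E : Type*} [NormedAddCommGroup E] [NormedSpace ℝ E] {F : ℝ × ℝ → E}
  {L : ℝ × ℝ →L[ℝ] E} {x y : ℝ}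

theorem HasFDerivAt.hasDerivAt_slice_fst (hF : HasFDerivAt F L (x, y)) :
    HasDerivAt (fun t => F (t, y)) (L (1, 0)) x :=
  hF.comp_hasDerivAt x ((hasDerivAt_id x).prodMk (hasDerivAt_const x y))

theorem HasFDerivAt.hasDerivAt_slice_snd (hF : HasFDerivAt F L (x, y)) :
    HasDerivAt (fun s => F (x, s)) (L (0, 1)) y :=
  hF.comp_hasDerivAt y ((hasDerivAt_const y x).prodMk (hasDerivAt_id y))

end Slices

section PartialDerivatives

variable {U : Set (ℝ × ℝ)} {f g : ℝ → ℝ → ℝ} {x y d : ℝ}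

theorem pdx_eq_of_hasDerivAt (hf : HasDerivAt (fun t => f t y) d x) : pdx f x y = d :=
  hf.deriv

theorem pdy_eq_of_hasDerivAt (hf : HasDerivAt (fun s => f x s) d y) : pdy f x y = d :=
  hf.deriv

theorem pdx_congr_of_isOpen (hU : IsOpen U) (hfg : ∀ a b, (a, b) ∈ U → f a b = g a b)
    (h : (x, y) ∈ U) : pdx f x y = pdx g x y := by
  have hslice : ∀ᶠ t in 𝓝 x, (t, y) ∈ U :=
    (continuous_id.prodMk continuous_const).continuousAt.preimage_mem_nhds (hU.mem_nhds h)
  exact Filter.EventuallyEq.deriv_eq (hslice.mono fun t ht => hfg t y ht)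

theorem pdy_congr_of_isOpen (hU : IsOpen U) (hfg : ∀ a b, (a, b) ∈ U → f a b = g a b)
    (h : (x, y) ∈ U) : pdy f x y = pdy g x y := by
  have hslice : ∀ᶠ s in 𝓝 y, (x, s) ∈ U :=
    (continuous_const.prodMk continuous_id).continuousAt.preimage_mem_nhds (hU.mem_nhds h)
  exact Filter.EventuallyEq.deriv_eq (hslice.mono fun s hs => hfg x s hs)

theorem pdx_eq_zero_of_isOpen (hU : IsOpen U) (hf : ∀ a b, (a, b) ∈ U → f a b = 0)
    (h : (x, y) ∈ U) : pdx f x y = 0 :=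
  (pdx_congr_of_isOpen (g := fun _ _ => 0) hU hf h).trans (deriv_const x 0)

theorem pdy_eq_zero_of_isOpen (hU : IsOpen U) (hf : ∀ a b, (a, b) ∈ U → f a b = 0)
    (h : (x, y) ∈ U) : pdy f x y = 0 :=
  (pdy_congr_of_isOpen (g := fun _ _ => 0) hU hf h).trans (deriv_const y 0)

theorem Smooth2.hasFDerivAt (hf : Smooth2 U f) (hU : IsOpen U) (h : (x, y) ∈ U) :
    HasFDerivAt (uncurry f) (fderiv ℝ (uncurry f) (x, y)) (x, y) :=
  ((hf.contDiffAt (hU.mem_nhds h)).differentiableAt (by simp)).hasFDerivAt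

theorem Smooth2.pdx_eq_fderiv_s17 (hf : Smooth2 U f) (hU : IsOpen U) (h : (x, y) ∈ U) :
    pdx f x y = fderiv ℝ (uncurry f) (x, y) (1, 0) :=
  pdx_eq_of_hasDerivAt (hf.hasFDerivAt hU h).hasDerivAt_slice_fst

theorem Smooth2.pdy_eq_fderiv_s17 (hf : Smooth2 U f) (hU : IsOpen U) (h : (x, y) ∈ U) :
    pdy f x y = fderiv ℝ (uncurry f) (x, y) (0, 1) :=
  pdy_eq_of_hasDerivAt (hf.hasFDerivAt hU h).hasDerivAt_slice_snd

theorem Smooth2.hasDerivAt_pdx_s17 (hf : Smooth2 U f) (hU : IsOpen U) (h : (x, y) ∈ U) :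
    HasDerivAt (fun t => f t y) (pdx f x y) x := by
  rw [hf.pdx_eq_fderiv_s17 hU h]
  exact (hf.hasFDerivAt hU h).hasDerivAt_slice_fst

theorem Smooth2.hasDerivAt_pdy_s17 (hf : Smooth2 U f) (hU : IsOpen U) (h : (x, y) ∈ U) :
    HasDerivAt (fun s => f x s) (pdy f x y) y := by
  rw [hf.pdy_eq_fderiv_s17 hU h]
  exact (hf.hasFDerivAt hU h).hasDerivAt_slice_snd

theorem Smooth2.contDiffOn_fderiv (hf : Smooth2 U f) (hU : IsOpen U) :
    ContDiffOn ℝ (⊤ : ℕ∞) (fderiv ℝ (uncurry f)) U :=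
  ((contDiffOn_infty_iff_fderiv_of_isOpen hU).1 hf).2

theorem Smooth2.smooth2_pdx_s17 (hf : Smooth2 U f) (hU : IsOpen U) : Smooth2 U (pdx f) :=
  ((hf.contDiffOn_fderiv hU).clm_apply contDiffOn_const).congr fun _ hp =>
    hf.pdx_eq_fderiv_s17 hU hp

theorem Smooth2.smooth2_pdy_s17 (hf : Smooth2 U f) (hU : IsOpen U) : Smooth2 U (pdy f) :=
  ((hf.contDiffOn_fderiv hU).clm_apply contDiffOn_const).congr fun _ hp =>
    hf.pdy_eq_fderiv_s17 hU hp

theorem Smooth2.hasFDerivAt_fderiv_apply (hf : Smooth2 U f) (hU : IsOpen U) (h : (x, y) ∈ U)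
    (w : ℝ × ℝ) :
    HasFDerivAt (fun p => fderiv ℝ (uncurry f) p w)
      ((ContinuousLinearMap.apply ℝ ℝ w).comp (fderiv ℝ (fderiv ℝ (uncurry f)) (x, y))) (x, y) :=
  (ContinuousLinearMap.apply ℝ ℝ w).hasFDerivAt.comp (x, y)
    (((hf.contDiffOn_fderiv hU).contDiffAt (hU.mem_nhds h)).differentiableAt
      (by simp)).hasFDerivAt

theorem Smooth2.pdx_pdy_eq_fderiv_fderiv (hf : Smooth2 U f) (hU : IsOpen U) (h : (x, y) ∈ U) :
    pdx (pdy f) x y = fderiv ℝ (fderiv ℝ (uncurry f)) (x, y) (1, 0) (0, 1) := by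
  rw [pdx_congr_of_isOpen hU (fun a b hab => hf.pdy_eq_fderiv_s17 hU hab) h]
  exact pdx_eq_of_hasDerivAt (hf.hasFDerivAt_fderiv_apply hU h (0, 1)).hasDerivAt_slice_fst

theorem Smooth2.pdy_pdx_eq_fderiv_fderiv (hf : Smooth2 U f) (hU : IsOpen U) (h : (x, y) ∈ U) :
    pdy (pdx f) x y = fderiv ℝ (fderiv ℝ (uncurry f)) (x, y) (0, 1) (1, 0) := by
  rw [pdy_congr_of_isOpen hU (fun a b hab => hf.pdx_eq_fderiv_s17 hU hab) h]
  exact pdy_eq_of_hasDerivAt (hf.hasFDerivAt_fderiv_apply hU h (1, 0)).hasDerivAt_slice_snd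

theorem Smooth2.pdx_pdy_comm (hf : Smooth2 U f) (hU : IsOpen U) (h : (x, y) ∈ U) :
    pdx (pdy f) x y = pdy (pdx f) x y := by
  have hsymm : IsSymmSndFDerivAt ℝ (uncurry f) (x, y) :=
    (hf.contDiffAt (hU.mem_nhds h)).isSymmSndFDerivAt
      (by rw [minSmoothness_of_isRCLikeNormedField]; exact WithTop.coe_le_coe.mpr le_top)
  rw [hf.pdx_pdy_eq_fderiv_fderiv hU h, hf.pdy_pdx_eq_fderiv_fderiv hU h, hsymm]

end PartialDerivatives

theorem pdx_pdx_eq_of_coefA_eq_zero {U : Set (ℝ × ℝ)} {P Q R S : ℝ → ℝ → ℝ} {x y : ℝ}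
    (hU : IsOpen U) (hPzero : ∀ a b, (a, b) ∈ U → P a b = 0) (hA : coefA P Q R S x y = 0)
    (h : (x, y) ∈ U) :
    pdx (pdx R) x y = 2 * pdx (pdy Q) x y + 3 * Q x y * pdx R x y - 6 * Q x y * pdy Q x y := by
  have hPx : pdx P x y = 0 := pdx_eq_zero_of_isOpen hU hPzero h
  have hPy : pdy P x y = 0 := pdy_eq_zero_of_isOpen hU hPzero h
  have hPyy : pdy (pdy P) x y = 0 :=
    pdy_eq_zero_of_isOpen hU (fun a b hab => pdy_eq_zero_of_isOpen hU hPzero hab) h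
  simp only [coefA, hPyy, hPx, hPy, hPzero x y h] at hA
  linarith

theorem covariant_derivative_identities_general
    (U : Set (ℝ × ℝ)) (hU : IsOpen U)
    (P Q R S : ℝ → ℝ → ℝ)
    (hQ : Smooth2 U Q) (hR : Smooth2 U R)
    (hPzero : ∀ x y : ℝ, (x, y) ∈ U → P x y = 0)
    (hA : ∀ x y : ℝ, (x, y) ∈ U → coefA P Q R S x y = 0)
    (hM : ∀ x y : ℝ, (x, y) ∈ U → pdx Q x y = (12/5) * (Q x y)^2) :
    ∀ x y : ℝ, (x, y) ∈ U →
      pdx (fun x y => pdx R x y - 2 * pdy Q x y) x y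
        = 3 * Q x y * (pdx R x y - 2 * pdy Q x y) ∧
      pdx (fun x y => -2 * pdx R x y + 3 * pdy Q x y + (6/5) * Q x y * R x y) x y
        = (12/5) * Q x y *
          (-2 * pdx R x y + 3 * pdy Q x y + (6/5) * Q x y * R x y) := by
  intro x y h
  have hRxx := pdx_pdx_eq_of_coefA_eq_zero hU hPzero (hA x y h) h
  have hQxy : pdx (pdy Q) x y = 24/5 * Q x y * pdy Q x y := by
    rw [hQ.pdx_pdy_comm hU h, pdy_congr_of_isOpen hU hM h,
      pdy_eq_of_hasDerivAt (((hQ.hasDerivAt_pdy_s17 hU h).pow 2).const_mul (12/5))]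
    ring
  have hRx' := (hR.smooth2_pdx_s17 hU).hasDerivAt_pdx_s17 hU h
  have hQy' := (hQ.smooth2_pdy_s17 hU).hasDerivAt_pdx_s17 hU h
  constructor
  · have hΩ : HasDerivAt (fun t => pdx R t y - 2 * pdy Q t y)
        (pdx (pdx R) x y - 2 * pdx (pdy Q) x y) x := hRx'.sub (hQy'.const_mul 2)
    rw [pdx_eq_of_hasDerivAt hΩ]
    linear_combination hRxx
  · have hQR : HasDerivAt (fun t => 6/5 * Q t y * R t y)
        (6/5 * pdx Q x y * R x y + 6/5 * Q x y * pdx R x y) x :=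
      ((hQ.hasDerivAt_pdx_s17 hU h).const_mul (6/5)).mul (hR.hasDerivAt_pdx_s17 hU h)
    have hΛ : HasDerivAt (fun t => -2 * pdx R t y + 3 * pdy Q t y + 6/5 * Q t y * R t y)
        (-2 * pdx (pdx R) x y + 3 * pdx (pdy Q) x y
          + (6/5 * pdx Q x y * R x y + 6/5 * Q x y * pdx R x y)) x :=
      ((hRx'.const_mul (-2)).add (hQy'.const_mul 3)).add hQR
    rw [pdx_eq_of_hasDerivAt hΛ]
    linear_combination -2 * hRxx - hQxy + 6/5 * R x y * hM x y h

/-- Covariant-derivative identities (7.18) and (7.19) in special coordinates: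
`Ω_{1.0} = 3·Q·Ω` and `Λ_{1.0} = (12/5)·Q·Λ` (equivalently `∇₁Ω = (9/5)·Q·Ω`
and `∇₁Λ = (6/5)·Q·Λ` with `φ₁ = −(6/5)·Q`). -/
theorem covariant_derivative_identities
    (U : Set (ℝ × ℝ)) (hU : IsOpen U) (hUconn : IsConnected U)
    (P Q R S : ℝ → ℝ → ℝ)
    (hP : Smooth2 U P) (hQ : Smooth2 U Q) (hR : Smooth2 U R) (hS : Smooth2 U S)
    (hPzero : ∀ x y : ℝ, (x, y) ∈ U → P x y = 0)
    (hA : ∀ x y : ℝ, (x, y) ∈ U → coefA P Q R S x y = 0)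
    (hB : ∀ x y : ℝ, (x, y) ∈ U → coefB P Q R S x y = 1)
    (hM : ∀ x y : ℝ, (x, y) ∈ U → pdx Q x y = (12/5) * (Q x y)^2) :
    ∀ x y : ℝ, (x, y) ∈ U →
      pdx (fun x y => pdx R x y - 2 * pdy Q x y) x y
        = 3 * Q x y * (pdx R x y - 2 * pdy Q x y) ∧
      pdx (fun x y => -2 * pdx R x y + 3 * pdy Q x y + (6/5) * Q x y * R x y) x y
        = (12/5) * Q x y *
          (-2 * pdx R x y + 3 * pdy Q x y + (6/5) * Q x y * R x y) :=
  covariant_derivative_identities_general U hU P Q R S hQ hR hPzero hA hM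
end
end
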